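/- Let ν ∈ ℝ and let z₂ : ℝ → ℝ be differentiable satisfying z₂' = (ν+1)(z₁+z₂) − (z₁+z₂)³ for a given continuous z₁ : ℝ → ℝ. Then for every μ > 0 there exist constants C_ν > 0 and C_{μ,ν} > 0 (independent of z₁, z₂) such that (1/2) d/dt |z₂(t)|² ≤ −(μ/2)|z₂(t)|² + C_ν (|z₁(t)|² + |z₁(t)|⁴) + C_{μ,ν} for all t. -/

import Mathlib

/-!
With `u = z₁ + z₂`, the equation gives `½ (z₂²)' = z₂ ((ν + 1) u - u³)`. The cubic term is
dissipative: by Young's inequality `-u³ z₂ ≤ -½ z₂⁴ + 32 z₁⁴`, and the quartic `-½ z₂⁴`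
absorbs every quadratic term in `z₂`, the extra `(μ / 2) z₂²` included, at the cost of a constant.
-/

lemma half_pow_four_sub_le_mul_add_pow_three (a b : ℝ) :
    b ^ 4 / 2 - 32 * a ^ 4 ≤ b * (a + b) ^ 3 := by
  -- the difference is `½ (b² + 3ab - 2a²)² + ½ a² (b + 7a)² + (11/2) a⁴`
  nlinarith [sq_nonneg (b ^ 2 + 3 * a * b - 2 * a ^ 2), sq_nonneg (a * (b + 7 * a)),
    sq_nonneg (a ^ 2)]

lemma mul_sq_sub_half_pow_four_le (c b : ℝ) : c * b ^ 2 - b ^ 4 / 2 ≤ c ^ 2 / 2 := by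
  nlinarith [sq_nonneg (b ^ 2 - c)]

lemma mul_linear_sub_cube_le (K μ a b : ℝ) :
    b * (K * (a + b) - (a + b) ^ 3)
      ≤ -(μ / 2) * b ^ 2 + (K ^ 2 / 2 + 32) * (a ^ 2 + a ^ 4) + (K + (1 + μ) / 2) ^ 2 / 2 := by
  have hcross : K * a * b ≤ K ^ 2 * a ^ 2 / 2 + b ^ 2 / 2 := by
    linarith [two_mul_le_add_sq (K * a) b, mul_pow K a 2]
  have hcubic := half_pow_four_sub_le_mul_add_pow_three a b
  have habsorb := mul_sq_sub_half_pow_four_le (K + (1 + μ) / 2) b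
  have hweights : K ^ 2 * a ^ 2 / 2 + 32 * a ^ 4 ≤ (K ^ 2 / 2 + 32) * (a ^ 2 + a ^ 4) := by
    nlinarith [sq_nonneg (K * a ^ 2), sq_nonneg a]
  linarith

theorem temperedness_differential_inequality_general (ν μ : ℝ) :
    ∃ Cν > 0, ∃ Cμν > 0,
      ∀ z₁ : ℝ → ℝ, Continuous z₁ →
      ∀ z₂ : ℝ → ℝ, Differentiable ℝ z₂ →
        (∀ t, deriv z₂ t = (ν + 1) * (z₁ t + z₂ t) - (z₁ t + z₂ t) ^ 3) →
        ∀ t : ℝ,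
          (1 / 2) * deriv (fun s => (z₂ s) ^ 2) t
            ≤ -(μ / 2) * (z₂ t) ^ 2 + Cν * ((z₁ t) ^ 2 + (z₁ t) ^ 4) + Cμν := by
  refine ⟨(ν + 1) ^ 2 / 2 + 32, by positivity,
    (ν + 1 + (1 + μ) / 2) ^ 2 / 2 + 1, by positivity, ?_⟩
  intro z₁ _ z₂ hz₂ hode t
  have hderiv : deriv (fun s => z₂ s ^ 2) t = 2 * z₂ t * deriv z₂ t := by
    simpa using deriv_fun_pow (hz₂ t) 2
  rw [hderiv, hode t]
  linarith [mul_linear_sub_cube_le (ν + 1) μ (z₁ t) (z₂ t)]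

theorem temperedness_differential_inequality (ν μ : ℝ) (hμ : 0 < μ) :
    ∃ Cν > 0, ∃ Cμν > 0,
      ∀ z₁ : ℝ → ℝ, Continuous z₁ →
      ∀ z₂ : ℝ → ℝ, Differentiable ℝ z₂ →
        (∀ t, deriv z₂ t = (ν + 1) * (z₁ t + z₂ t) - (z₁ t + z₂ t) ^ 3) →
        ∀ t : ℝ,
          (1 / 2) * deriv (fun s => (z₂ s) ^ 2) t
            ≤ -(μ / 2) * (z₂ t) ^ 2 + Cν * ((z₁ t) ^ 2 + (z₁ t) ^ 4) + Cμν :=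
  temperedness_differential_inequality_general ν μ
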